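/- Let F be a p-adic field, E/F a ramified quadratic extension, π a supercuspidal representation of GL₂(F) with trivial central character and conductor exponent c(π) = 2n+1, and χ a character of E^× trivial on F^× such that the local period functional Hom_{E^×}(π ⊗ χ, ℂ) is nonzero. Let φ_v = π(diag(v,1))φ₀ for the minimal vector φ₀, and suppose the diagonal period {φ_x, φ_x} is nonzero for exactly one class x ∈ (O_F/ϖ^{⌈n/2⌉}O_F)^×. Then for the translated newform φ̃ = π(diag(ϖⁿ,1))φ_new (with φ_new L²-normalized), the period satisfies {φ̃, φ̃} = (1/((q-1)q^{⌈n/2⌉-1}))·{φ_x, φ_x}. -/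

import Mathlib

/-!
Since the period pairing factors as `C · F(a) · conj F(b)` with `C ≠ 0`, a vanishing diagonal
period `{φ_x, φ_x}` forces `F(φ_x) = 0`. Hence `F` kills every summand of the newform except
`φ_{x₀}`, and the normalizing factor `1/√N` enters the period as `|1/√N|² = 1/N`.
-/

open ComplexConjugate

theorem eq_zero_of_mul_mul_conj_self_eq_zero {C z : ℂ} (hC : C ≠ 0)
    (h : C * z * conj z = 0) : z = 0 := by
  simpa [hC] using h

theorem LinearMap.map_sum_eq_of_unique_nonzero_period {V ι : Type*} [AddCommGroup V] [Module ℂ V]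
    [Fintype ι] (F : V →ₗ[ℂ] ℂ) {C : ℂ} (hC : C ≠ 0) (φ : ι → V) {x₀ : ι}
    (huniq : ∀ x, C * F (φ x) * conj (F (φ x)) ≠ 0 → x = x₀) :
    F (∑ x, φ x) = F (φ x₀) := by
  rw [map_sum, Finset.sum_eq_single_of_mem x₀ (Finset.mem_univ _)]
  intro x _ hx
  by_contra hF
  exact hx (huniq x fun h ↦ hF (eq_zero_of_mul_mul_conj_self_eq_zero hC h))

theorem Complex.inv_sqrt_mul_conj_inv_sqrt {r : ℝ} (hr : 0 ≤ r) :
    ((Real.sqrt r : ℂ))⁻¹ * conj ((Real.sqrt r : ℂ))⁻¹ = (r : ℂ)⁻¹ := by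
  rw [map_inv₀, Complex.conj_ofReal, ← mul_inv, ← Complex.ofReal_mul, Real.mul_self_sqrt hr]

theorem stmt15_general
    (V : Type*) [AddCommGroup V] [Module ℂ V]
    (q n : ℕ)
    (ι : Type*) [Fintype ι]
    (B : V → V → ℂ)
    -- multiplicity one: the pairing factors through one invariant functional
    (F : V →ₗ[ℂ] ℂ) (C : ℂ) (hC : C ≠ 0)
    (hmult1 : ∀ a b : V, B a b = C * F a * (starRingEnd ℂ) (F b))
    (φ : ι → V) (φnew : V)
    (hnew : φnew =
      ((Real.sqrt (((q - 1) * q ^ ((n + 1) / 2 - 1) : ℕ) : ℝ) : ℂ))⁻¹ • ∑ x, φ x)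
    (x₀ : ι)
    (huniq : ∀ x : ι, B (φ x) (φ x) ≠ 0 → x = x₀) :
    B φnew φnew = ((((q - 1) * q ^ ((n + 1) / 2 - 1) : ℕ) : ℂ))⁻¹ *
      B (φ x₀) (φ x₀) := by
  set N : ℕ := (q - 1) * q ^ ((n + 1) / 2 - 1)
  have hsum : F (∑ x, φ x) = F (φ x₀) :=
    F.map_sum_eq_of_unique_nonzero_period hC φ fun x hx ↦ huniq x (by rwa [hmult1])
  have hnorm : ((Real.sqrt N : ℂ))⁻¹ * conj ((Real.sqrt N : ℂ))⁻¹ = (N : ℂ)⁻¹ := by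
    simpa only [Complex.ofReal_natCast] using Complex.inv_sqrt_mul_conj_inv_sqrt N.cast_nonneg
  rw [hmult1, hmult1, hnew, map_smul, hsum, smul_eq_mul, map_mul, ← hnorm]
  ring

/-- period of the translated newform when exactly one diagonal
period of the minimal-vector family is nonzero:
{φ̃,φ̃} = (1/((q-1)q^{⌈n/2⌉-1}))·{φ_{x₀},φ_{x₀}}. The newform is the normalized
sum of the translated minimal vectors φ_x, x ∈ (O_F/ϖ^{⌈n/2⌉}O_F)^×, and the
period pairing factors through a single E^×-invariant functional
(multiplicity one). -/
theorem stmt15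
    (V : Type*) [AddCommGroup V] [Module ℂ V]
    (q n : ℕ) (hq : 2 ≤ q) (hn : 1 ≤ n)
    (ι : Type*) [Fintype ι]
    (hcard : Fintype.card ι = (q - 1) * q ^ ((n + 1) / 2 - 1))
    (B : V → V → ℂ)
    (Badd_l : ∀ a b c : V, B (a + b) c = B a c + B b c)
    (Badd_r : ∀ a b c : V, B a (b + c) = B a b + B a c)
    (Bsmul_l : ∀ (r : ℂ) (a b : V), B (r • a) b = r * B a b)
    (Bsmul_r : ∀ (r : ℂ) (a b : V), B a (r • b) = (starRingEnd ℂ) r * B a b)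
    -- multiplicity one: the pairing factors through one invariant functional
    (F : V →ₗ[ℂ] ℂ) (C : ℂ) (hC : C ≠ 0)
    (hmult1 : ∀ a b : V, B a b = C * F a * (starRingEnd ℂ) (F b))
    (φ : ι → V) (φnew : V)
    (hnew : φnew =
      ((Real.sqrt (((q - 1) * q ^ ((n + 1) / 2 - 1) : ℕ) : ℝ) : ℂ))⁻¹ • ∑ x, φ x)
    (x₀ : ι) (h₀ : B (φ x₀) (φ x₀) ≠ 0)
    (huniq : ∀ x : ι, B (φ x) (φ x) ≠ 0 → x = x₀) :
    B φnew φnew = ((((q - 1) * q ^ ((n + 1) / 2 - 1) : ℕ) : ℂ))⁻¹ *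
      B (φ x₀) (φ x₀) :=
  stmt15_general V q n ι B F C hC hmult1 φ φnew hnew x₀ huniq
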